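/- Let N be a stable 3-pair network such that for all pairwise distinct i, j, l ∈ {1,2,3}, either m_{i,j}^i = {l} or m_{i,l}^i = {j}. If m_{i,j}^i = {l} for some pairwise distinct i, j, l, then l ∈ m_{i,j}^i, j ∈ m_{i,l}^l, and i ∈ m_{j,l}^j. -/

import Mathlib

/-!
Write `ℓ` for `ℓ^{x,y}`. The heart of the matter: in a stable 3-pair network, with `x, y, z`
distinct, `ℓ(P_{z,y}) = 1` forces `ℓ(P_{x,x}) = 1` or `ℓ(P_{y,x}) = 1`. The statement follows by
playing the hypothesis on the three pairs of sinks against this.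

First, `ℓ(P_{z,y}) = 1` makes every `P_{a,x}` with `a ≠ z` vertex-disjoint from `P_{z,y}`. If
moreover `ℓ(P_{a,x}) ≠ 1`, then `P_{a,x}` carries a second l.c.s. besides the one through `s_a`
that it shares with `P_{a,y}`. So `P_{a,x}` and `P_{a,y}` part and meet again, and stability
forces `P_{a,x}` to meet `P_{b,y}` (`b` the third source) before they meet again. With
`(a, b) = (x, y)` and `(y, x)`, `P_{x,x}` meets `P_{y,y}` and `P_{y,x}` meets `P_{x,y}`. Rerouting
`P_{x,x}` into `P_{y,y}` and `P_{y,x}` into `P_{x,y}` at their first meeting points then gives a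
second arc-disjoint system of paths towards `t_y`.
-/

open scoped BigOperators

/-- A `k`-pair network: a finite DAG with `k` sources of in-degree 0 and
`k` sinks of out-degree 0. -/
structure KPairNetwork (k : ℕ) where
  V : Type
  A : Type
  [fintypeV : Fintype V]
  [fintypeA : Fintype A]
  [decEqV : DecidableEq V]
  [decEqA : DecidableEq A]
  tail : A → V
  head : A → V
  /-- acyclicity, via a topological ordering of the vertices -/
  acyclic : ∃ ord : V → ℕ, ∀ a : A, ord (tail a) < ord (head a)
  src : Fin k → V
  snk : Fin k → V
  src_inj : Function.Injective src
  snk_inj : Function.Injective snk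
  src_no_in : ∀ (i : Fin k) (a : A), head a ≠ src i
  snk_no_out : ∀ (i : Fin k) (a : A), tail a ≠ snk i

attribute [instance] KPairNetwork.fintypeV KPairNetwork.fintypeA
attribute [instance] KPairNetwork.decEqV KPairNetwork.decEqA

namespace KPairNetwork

variable {k : ℕ} (N : KPairNetwork k)

/-- `l` is (the list of arcs of) a directed path from `u` to `v`. -/
def IsPathFrom (u v : N.V) (l : List N.A) : Prop :=
  l ≠ [] ∧ l.Chain' (fun a b => N.head a = N.tail b) ∧
    (∀ a ∈ l.head?, N.tail a = u) ∧ (∀ a ∈ l.getLast?, N.head a = v)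

/-- The vertices lying on a (nonempty) list of arcs. -/
def pathVerts (l : List N.A) : Set N.V :=
  {v | ∃ a ∈ l, v = N.tail a ∨ v = N.head a}

/-- `P i j` is a path from `s i` to `t j`, and for each sink `j` the `k`
paths `P · j` are pairwise arc-disjoint (strong reachability). -/
def IsStrongSystem (P : Fin k → Fin k → List N.A) : Prop :=
  (∀ i j, N.IsPathFrom (N.src i) (N.snk j) (P i j)) ∧
    ∀ (j i i' : Fin k), i ≠ i' → ∀ a : N.A, a ∈ P i j → a ∉ P i' j

/-- Extra strong reachability: in addition, for each sink `j`, two distinct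
paths towards `t j` share no vertex other than `t j`. -/
def IsExtraStrongSystem (P : Fin k → Fin k → List N.A) : Prop :=
  N.IsStrongSystem P ∧
    ∀ (j i i' : Fin k), i ≠ i' →
      ∀ v : N.V, v ∈ N.pathVerts (P i j) → v ∈ N.pathVerts (P i' j) → v = N.snk j

/-- Stability: the choice of the `k` pairwise arc-disjoint paths towards each
sink is unique. -/
def IsStableSystem (P : Fin k → Fin k → List N.A) : Prop :=
  N.IsStrongSystem P ∧
    ∀ (j : Fin k) (Q : Fin k → List N.A),
      (∀ i, N.IsPathFrom (N.src i) (N.snk j) (Q i)) →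
      (∀ i i', i ≠ i' → ∀ a : N.A, a ∈ Q i → a ∉ Q i') →
      ∀ i, Q i = P i j

/-- `excess_f(v) = Σ_{head a = v} f a − Σ_{tail a = v} f a`. -/
noncomputable def excess (f : N.A → ℝ) (v : N.V) : ℝ :=
  (∑ a : N.A, if N.head a = v then f a else 0) -
    (∑ a : N.A, if N.tail a = v then f a else 0)

/-- An `u`–`v` flow: zero excess away from `u` and `v`. -/
def IsFlow (u v : N.V) (f : N.A → ℝ) : Prop :=
  ∀ w : N.V, w ≠ u → w ≠ v → N.excess f w = 0

/-- The unit flow along a path: `1` on its arcs and `0` elsewhere. -/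
noncomputable def unitFlow (l : List N.A) : N.A → ℝ :=
  fun a => if a ∈ l then 1 else 0

/-- The set of source/sink index pairs whose path passes through the arc `a`. -/
def arcPattern (P : Fin k → Fin k → List N.A) (a : N.A) : Finset (Fin k × Fin k) :=
  Finset.univ.filter (fun q => a ∈ P q.1 q.2)

/-- `S_N`, the family of index-pair patterns of the arcs of `N`. -/
def SN (P : Fin k → Fin k → List N.A) : Set (Finset (Fin k × Fin k)) :=
  {T | ∃ a : N.A, T = N.arcPattern P a}

/-! ### Segments and longest common segments -/

/-- A segment: a start vertex together with a (possibly empty) chained list of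
arcs starting there.  A segment with no arcs is a single vertex. -/
def IsSeg (s : N.V × List N.A) : Prop :=
  s.2.Chain' (fun a b => N.head a = N.tail b) ∧ ∀ a ∈ s.2.head?, N.tail a = s.1

/-- The vertices of a segment. -/
def segVerts (s : N.V × List N.A) : Set N.V :=
  insert s.1 (N.pathVerts s.2)

/-- The final vertex of a segment. -/
def segEnd (s : N.V × List N.A) : N.V :=
  s.2.getLast?.elim s.1 N.head

/-- The segment `s` lies on the path `p`. -/
def SegOn (s : N.V × List N.A) (p : List N.A) : Prop :=
  s.2 <:+: p ∧ s.1 ∈ N.pathVerts p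

/-- The segment `s` is contained in the segment `s'`. -/
def SegLE (s s' : N.V × List N.A) : Prop :=
  s.2 <:+: s'.2 ∧ s.1 ∈ N.segVerts s'

/-- `s` is a longest common segment (l.c.s.) of the set of paths `ps`:
it is a segment common to all paths of `ps`, and no segment properly
containing it is common to all paths of `ps`. -/
def IsLCS (ps : Set (List N.A)) (s : N.V × List N.A) : Prop :=
  N.IsSeg s ∧ (∀ p ∈ ps, N.SegOn s p) ∧
    ∀ s' : N.V × List N.A, N.IsSeg s' → N.SegLE s s' → s' ≠ s →
      ∃ p ∈ ps, ¬ N.SegOn s' p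

/-- `s` is an l.c.s. of some pair `{P i j₁, P i' j₂}` and lies on `p`. -/
def IsPairLCSOn (P : Fin k → Fin k → List N.A) (j₁ j₂ : Fin k)
    (p : List N.A) (s : N.V × List N.A) : Prop :=
  (∃ i i' : Fin k, N.IsLCS {P i j₁, P i' j₂} s) ∧ N.SegOn s p

/-- `ℓ^{j₁,j₂}(p)`: the number of l.c.s.'s of pairs `{P i j₁, P i' j₂}` lying
on the path `p`. -/
noncomputable def lcsCount (P : Fin k → Fin k → List N.A) (j₁ j₂ : Fin k)
    (p : List N.A) : ℕ :=
  Nat.card {s : N.V × List N.A | N.IsPairLCSOn P j₁ j₂ p s}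

/-- `m_{j₁,j₂}^c = {i : ℓ^{j₁,j₂}(P_{s_i,t_c}) = 1}`. -/
def mset (P : Fin k → Fin k → List N.A) (j₁ j₂ c : Fin k) : Set (Fin k) :=
  {i | N.lcsCount P j₁ j₂ (P i c) = 1}

/-- `u` lies strictly before `v` along the path `p` (there is a nonempty
infix of `p` going from `u` to `v`). -/
def StrictlyBeforeOn (p : List N.A) (u v : N.V) : Prop :=
  ∃ l : List N.A, l <:+: p ∧ l.head?.map N.tail = some u ∧ l.getLast?.map N.head = some v

/-- `e 0, …, e (L-1)` enumerates, in the order along `p`, the l.c.s.'s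
`p(1) < p(2) < ⋯ < p(L)` of pairs `{P i j₁, P i' j₂}` lying on `p`. -/
def IsLCSEnum (P : Fin k → Fin k → List N.A) (j₁ j₂ : Fin k) (p : List N.A)
    (e : ℕ → N.V × List N.A) (L : ℕ) : Prop :=
  (∀ n, n < L → N.IsPairLCSOn P j₁ j₂ p (e n)) ∧
  (∀ s, N.IsPairLCSOn P j₁ j₂ p s → ∃ n, n < L ∧ e n = s) ∧
  (∀ m n, m < n → n < L → N.StrictlyBeforeOn p (N.segEnd (e m)) (e n).1)

/-! ### Residual networks, regular cycles, semi-cycles and crossings -/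

/-- `a` is a `P_{t_j}`-arc. -/
def isPArc (P : Fin k → Fin k → List N.A) (j : Fin k) (a : N.A) : Prop :=
  ∃ i, a ∈ P i j

/-- The tail of `a` in the `j`-th residual network `N_j` (in which all
`P_{t_j}`-arcs are reversed). -/
def rtail (P : Fin k → Fin k → List N.A) (j : Fin k) (a : N.A) : N.V :=
  if ∃ i, a ∈ P i j then N.head a else N.tail a

/-- The head of `a` in the `j`-th residual network `N_j`. -/
def rhead (P : Fin k → Fin k → List N.A) (j : Fin k) (a : N.A) : N.V :=
  if ∃ i, a ∈ P i j then N.tail a else N.head a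

/-- `l` is a directed cycle of the residual network `N_j`. -/
def IsResidCycle (P : Fin k → Fin k → List N.A) (j : Fin k) (l : List N.A) : Prop :=
  l ≠ [] ∧ l.Nodup ∧
  l.Chain' (fun a b => N.rhead P j a = N.rtail P j b) ∧
  (∀ a ∈ l.getLast?, ∀ b ∈ l.head?, N.rhead P j a = N.rtail P j b) ∧
  (l.map (N.rtail P j)).Nodup

/-- A regular cycle of `N_j`: a directed cycle of `N_j` having no isolated
vertex of `P_{t_j}`, i.e. every vertex of the cycle lying on a path of
`P_{t_j}` is incident in the cycle to some (reversed) `P_{t_j}`-arc. -/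
def IsRegularCycle (P : Fin k → Fin k → List N.A) (j : Fin k) (l : List N.A) : Prop :=
  N.IsResidCycle P j l ∧
    ∀ v ∈ l.map (N.rtail P j),
      (∃ i, v ∈ N.pathVerts (P i j)) →
      ∃ a ∈ l, N.isPArc P j a ∧ (v = N.tail a ∨ v = N.head a)

/-- A `P_{t_j}`-semi-cycle of `N`: the arc set of a regular cycle of `N_j`,
with the original orientations of `N` restored. -/
def IsSemiCycle (P : Fin k → Fin k → List N.A) (j : Fin k) (E : Set N.A) : Prop :=
  ∃ l : List N.A, N.IsRegularCycle P j l ∧ E = {a | a ∈ l}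

/-- A `P_{t_j}`-crossing of `N`: a `P_{t_j}`-semi-cycle with all its
`P_{t_j}`-arcs removed. -/
def IsCrossing (P : Fin k → Fin k → List N.A) (j : Fin k) (E : Set N.A) : Prop :=
  ∃ l : List N.A, N.IsRegularCycle P j l ∧ E = {a | a ∈ l ∧ ¬ N.isPArc P j a}

end KPairNetwork

namespace KPairNetwork

variable {k : ℕ} {N : KPairNetwork k}

theorem nodup_of_isChain {l : List N.A} (hl : l.IsChain fun a b => N.head a = N.tail b) :
    l.Nodup := by
  obtain ⟨ord, hord⟩ := N.acyclic
  have hmap : (l.map fun a => ord (N.tail a)).IsChain (· < ·) :=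
    (List.isChain_map _).2 (hl.imp fun a b (h : N.head a = N.tail b) => h ▸ hord a)
  exact (List.isChain_iff_pairwise.1 hmap).nodup.of_map _

namespace IsPathFrom

variable {u w : N.V} {p : List N.A}

theorem isChain (hp : N.IsPathFrom u w p) : p.IsChain fun a b => N.head a = N.tail b := hp.2.1

theorem tail_eq_or_exists_head_eq (hp : N.IsPathFrom u w p) {a : N.A} (ha : a ∈ p) :
    N.tail a = u ∨ ∃ b ∈ p, N.head b = N.tail a := by
  obtain ⟨s, t, rfl⟩ := List.mem_iff_append.1 ha
  rcases List.eq_nil_or_concat s with rfl | ⟨s', b, rfl⟩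
  · exact Or.inl (hp.2.2.1 a rfl)
  · exact Or.inr ⟨b, by simp, (List.isChain_append.1 hp.isChain).2.2 b (by simp) a rfl⟩

theorem head_eq_or_exists_tail_eq (hp : N.IsPathFrom u w p) {a : N.A} (ha : a ∈ p) :
    N.head a = w ∨ ∃ b ∈ p, N.tail b = N.head a := by
  obtain ⟨s, t, rfl⟩ := List.mem_iff_append.1 ha
  rcases t with _ | ⟨b, t⟩
  · exact Or.inl (hp.2.2.2 a (by simp))
  · refine Or.inr ⟨b, by simp, ?_⟩
    exact (List.isChain_cons_cons.1 (List.isChain_append.1 hp.isChain).2.1).1.symm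

theorem src_eq (hp : N.IsPathFrom u w p) {c : Fin k} (hc : N.src c ∈ N.pathVerts p) :
    N.src c = u := by
  obtain ⟨a, ha, h | h⟩ := hc
  · rcases hp.tail_eq_or_exists_head_eq ha with h' | ⟨b, -, hb⟩
    · exact h.trans h'
    · exact absurd (hb.trans h.symm) (N.src_no_in c b)
  · exact absurd h.symm (N.src_no_in c a)

theorem snk_eq (hp : N.IsPathFrom u w p) {c : Fin k} (hc : N.snk c ∈ N.pathVerts p) :
    N.snk c = w := by
  obtain ⟨a, ha, h | h⟩ := hc
  · exact absurd h.symm (N.snk_no_out c a)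
  · rcases hp.head_eq_or_exists_tail_eq ha with h' | ⟨b, -, hb⟩
    · exact h.trans h'
    · exact absurd (hb.trans h.symm) (N.snk_no_out c b)

theorem start_mem (hp : N.IsPathFrom u w p) : u ∈ N.pathVerts p := by
  obtain ⟨a, t, rfl⟩ := List.exists_cons_of_ne_nil hp.1
  exact ⟨a, List.mem_cons_self, Or.inl (hp.2.2.1 a rfl).symm⟩

theorem exists_eq_append_cons (hp : N.IsPathFrom u w p) {v : N.V} (hv : v ∈ N.pathVerts p)
    (hvw : v ≠ w) : ∃ p₁ f p₂, p = p₁ ++ f :: p₂ ∧ N.tail f = v := by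
  suffices ∃ f ∈ p, N.tail f = v by
    obtain ⟨f, hf, rfl⟩ := this
    obtain ⟨p₁, p₂, rfl⟩ := List.mem_iff_append.1 hf
    exact ⟨p₁, f, p₂, rfl, rfl⟩
  obtain ⟨a, ha, rfl | rfl⟩ := hv
  · exact ⟨a, ha, rfl⟩
  · rcases hp.head_eq_or_exists_tail_eq ha with h | ⟨b, hb, hba⟩
    · exact absurd h hvw
    · exact ⟨b, hb, hba⟩

theorem exists_first_tail_mem (hp : N.IsPathFrom u w p) {S : Set N.V}
    (hS : (N.pathVerts p ∩ S).Nonempty) (hw : w ∉ S) :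
    ∃ p₁ f p₂, p = p₁ ++ f :: p₂ ∧ N.tail f ∈ S ∧ ∀ e ∈ p₁, N.tail e ∉ S := by
  classical
  obtain ⟨v, hv, hvS⟩ := hS
  obtain ⟨p₁, f₀, p₂, rfl, rfl⟩ := hp.exists_eq_append_cons hv (ne_of_mem_of_not_mem hvS hw)
  set l := p₁ ++ f₀ :: p₂
  have hne : l.dropWhile (fun e => decide (N.tail e ∉ S)) ≠ [] := by
    rw [Ne, List.dropWhile_eq_nil_iff]
    exact fun h => by simpa [hvS] using h f₀ (by simp [l])
  obtain ⟨f, q, hfq⟩ := List.exists_cons_of_ne_nil hne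
  refine ⟨l.takeWhile fun e => decide (N.tail e ∉ S), f, q, ?_, ?_, ?_⟩
  · rw [← hfq, List.takeWhile_append_dropWhile]
  · have := List.head_dropWhile_not (fun e => decide (N.tail e ∉ S)) hne
    simp only [hfq, List.head_cons] at this
    simpa using this
  · exact fun e he => by simpa using List.mem_takeWhile_imp he

theorem splice {u' w' : N.V} {p₁ p₂ q₁ q₂ : List N.A} {f g : N.A}
    (hp : N.IsPathFrom u w (p₁ ++ f :: p₂)) (hq : N.IsPathFrom u' w' (q₁ ++ g :: q₂))
    (hfg : N.tail f = N.tail g) : N.IsPathFrom u w' (p₁ ++ g :: q₂) := by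
  obtain ⟨hp₁, -, hjoin⟩ := List.isChain_append.1 hp.isChain
  refine ⟨by simp, List.isChain_append.2 ⟨hp₁, (List.isChain_append.1 hq.isChain).2.1,
    fun a ha b hb => ?_⟩, fun a ha => ?_, fun a ha => ?_⟩
  · obtain rfl : g = b := by simpa using hb
    exact (hjoin a ha f rfl).trans hfg
  · rcases p₁ with _ | ⟨c, p₁⟩
    · obtain rfl : g = a := by simpa using ha
      exact hfg.symm.trans (hp.2.2.1 f rfl)
    · exact hp.2.2.1 a (by simpa using ha)
  · exact hq.2.2.2 a (by simpa [List.getLast?_append] using ha)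

theorem tail_mem_segVerts {p₁ p₂ : List N.A} {f : N.A}
    (hp : N.IsPathFrom u w (p₁ ++ f :: p₂)) : N.tail f ∈ N.segVerts (u, p₁) := by
  rcases List.eq_nil_or_concat p₁ with rfl | ⟨l, b, rfl⟩
  · exact Or.inl (hp.2.2.1 f rfl)
  · refine Or.inr ⟨b, by simp, Or.inr ?_⟩
    exact ((List.isChain_append.1 hp.isChain).2.2 b (by simp) f rfl).symm

theorem isSeg_of_eq_append {p₁ p₂ : List N.A} (hp : N.IsPathFrom u w (p₁ ++ p₂)) :
    N.IsSeg (u, p₁) := by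
  refine ⟨hp.isChain.left_of_append, fun a ha => hp.2.2.1 a ?_⟩
  rcases p₁ with _ | ⟨b, l⟩
  · simp at ha
  · simpa using ha

theorem exists_eq_append_cons_of_segOn (hp : N.IsPathFrom u w p) {q : List N.A}
    (hw : w ∉ N.pathVerts q) {c : N.V × List N.A} (hc : N.IsSeg c) (hcp : N.SegOn c p)
    (hcq : N.SegOn c q) : ∃ p₁ f p₂, p = p₁ ++ f :: p₂ ∧ c.2 <:+: p₁ ∧
      c.1 ∈ N.segVerts (u, p₁) ∧ N.tail f ∈ N.pathVerts q := by
  rcases List.eq_nil_or_concat' c.2 with hc2 | ⟨l, h, hc2⟩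
  · have hcw : c.1 ≠ w := fun h => hw (h ▸ hcq.2)
    obtain ⟨p₁, f, p₂, rfl, hf⟩ := hp.exists_eq_append_cons hcp.2 hcw
    exact ⟨p₁, f, p₂, rfl, hc2 ▸ List.nil_infix, hf ▸ hp.tail_mem_segVerts, hf ▸ hcq.2⟩
  · obtain ⟨pre, post, hsplit⟩ := hcp.1
    have hhq : N.head h ∈ N.pathVerts q := ⟨h, hcq.1.subset (by simp [hc2]), Or.inr rfl⟩
    rw [hc2] at hsplit
    subst hsplit
    rcases post with _ | ⟨f, p₂⟩
    · exact absurd (hp.2.2.2 h (by simp) ▸ hhq) hw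
    · refine ⟨pre ++ l ++ [h], f, p₂, by simp, ⟨pre, [], by simp [hc2]⟩, ?_, ?_⟩
      · obtain ⟨d, hd⟩ : ∃ d, c.2.head? = some d := Option.isSome_iff_exists.1 (by simp [hc2])
        have hdc : d ∈ c.2 := List.mem_of_mem_head? hd
        rw [hc2] at hdc
        exact Or.inr ⟨d, by simp_all, Or.inl (hc.2 d hd).symm⟩
      · have := (List.isChain_append.1 hp.isChain).2.2 h (by simp) f rfl
        exact this ▸ hhq

end IsPathFrom

theorem segLE_refl (s : N.V × List N.A) : N.SegLE s s :=
  ⟨List.infix_refl _, Set.mem_insert _ _⟩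

theorem SegLE.trans {s t r : N.V × List N.A} (hst : N.SegLE s t) (htr : N.SegLE t r) :
    N.SegLE s r := by
  refine ⟨hst.1.trans htr.1, ?_⟩
  rcases hst.2 with h | ⟨a, ha, hv⟩
  · exact h ▸ htr.2
  · exact Or.inr ⟨a, htr.1.subset ha, hv⟩

theorem IsSeg.length_lt_of_segLE {s t : N.V × List N.A} (hs : N.IsSeg s) (ht : N.IsSeg t)
    (hst : N.SegLE s t) (hne : s ≠ t) : s.2.length < t.2.length := by
  refine lt_of_le_of_ne hst.1.length_le fun hlen => hne ?_
  have h2 : s.2 = t.2 := hst.1.eq_of_length hlen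
  refine Prod.ext ?_ h2
  rcases hs2 : s.2 with _ | ⟨a, l⟩
  · rcases hst.2 with h | ⟨b, hb, -⟩
    · exact h
    · simp [← h2, hs2] at hb
  · rw [← hs.2 a (by simp [hs2]), ← ht.2 a (by simp [← h2, hs2])]

theorem isSeg_nil (v : N.V) : N.IsSeg (v, []) := ⟨List.isChain_nil, by simp⟩

theorem segOn_nil {v : N.V} {p : List N.A} (hv : v ∈ N.pathVerts p) : N.SegOn (v, []) p :=
  ⟨List.nil_infix, hv⟩

theorem SegOn.mem_pathVerts {s : N.V × List N.A} {p : List N.A} (hs : N.SegOn s p) {v : N.V}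
    (hv : v ∈ N.segVerts s) : v ∈ N.pathVerts p := by
  rcases hv with rfl | ⟨a, ha, hva⟩
  · exact hs.2
  · exact ⟨a, hs.1.subset ha, hva⟩

theorem exists_isLCS_segLE {p q : List N.A} {c : N.V × List N.A} (hc : N.IsSeg c)
    (hcp : N.SegOn c p) (hcq : N.SegOn c q) : ∃ s, N.IsLCS {p, q} s ∧ N.SegLE c s := by
  let S := {s | N.IsSeg s ∧ N.SegLE c s ∧ N.SegOn s p ∧ N.SegOn s q}
  obtain ⟨s, ⟨hs, hcs, hsp, hsq⟩, hmin⟩ :=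
    (measure fun s : N.V × List N.A => p.length - s.2.length).wf.has_min S
      ⟨c, hc, segLE_refl c, hcp, hcq⟩
  refine ⟨s, ⟨hs, by simp [hsp, hsq], fun t ht hst hne => ?_⟩, hcs⟩
  by_contra! hcommon
  have hlt := hs.length_lt_of_segLE ht hst (Ne.symm hne)
  have htp : t.2.length ≤ p.length := (hcommon p (by simp)).1.length_le
  exact hmin t ⟨ht, hcs.trans hst, hcommon p (by simp), hcommon q (by simp)⟩
    (show p.length - t.2.length < p.length - s.2.length by omega)

theorem IsPathFrom.exists_isLCS_start {u w w' : N.V} {p q : List N.A} (hp : N.IsPathFrom u w p)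
    (hq : N.IsPathFrom u w' q) : ∃ s, N.IsLCS {p, q} s ∧ u ∈ N.segVerts s := by
  obtain ⟨s, hs, hus⟩ := exists_isLCS_segLE (isSeg_nil u) (segOn_nil hp.start_mem)
    (segOn_nil hq.start_mem)
  exact ⟨s, hs, hus.2⟩

theorem IsLCS.eq_of_segLE {ps : Set (List N.A)} {s t : N.V × List N.A} (hs : N.IsLCS ps s)
    (ht : N.IsSeg t) (hst : N.SegLE s t) (htps : ∀ p ∈ ps, N.SegOn t p) : t = s := by
  by_contra hne
  obtain ⟨p, hp, hnot⟩ := hs.2.2 t ht hst hne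
  exact hnot (htps p hp)

section Agree

variable {u w w' : N.V} {p q : List N.A}

theorem IsLCS.exists_eq_prefix (hp : N.IsPathFrom u w p) (hq : N.IsPathFrom u w' q)
    (hw : w ∉ N.pathVerts q) (hw' : w' ∉ N.pathVerts p)
    (hagree : ∀ p₁ f p₂ q₁ g q₂, p = p₁ ++ f :: p₂ → q = q₁ ++ g :: q₂ →
      N.tail f = N.tail g → p₁ = q₁) {c : N.V × List N.A} (hc : N.IsLCS {p, q} c) :
    ∃ π, c = (u, π) ∧ π <+: p := by
  obtain ⟨p₁, f, p₂, rfl, hcp₁, hc₁, hfq⟩ := hp.exists_eq_append_cons_of_segOn hw hc.1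
    (hc.2.1 _ (by simp)) (hc.2.1 _ (by simp))
  have hfw' : N.tail f ≠ w' := fun h => hw' (h ▸ ⟨f, by simp, Or.inl rfl⟩)
  obtain ⟨q₁, g, q₂, rfl, hg⟩ := hq.exists_eq_append_cons hfq hfw'
  obtain rfl := hagree p₁ f p₂ q₁ g q₂ rfl rfl hg.symm
  refine ⟨p₁, (hc.eq_of_segLE hp.isSeg_of_eq_append ⟨hcp₁, hc₁⟩ ?_).symm, by simp⟩
  rintro r (rfl | rfl)
  · exact ⟨(List.prefix_append _ _).isInfix, hp.start_mem⟩
  · exact ⟨(List.prefix_append _ _).isInfix, hq.start_mem⟩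

theorem IsLCS.eq_of_agree (hp : N.IsPathFrom u w p) (hq : N.IsPathFrom u w' q)
    (hw : w ∉ N.pathVerts q) (hw' : w' ∉ N.pathVerts p)
    (hagree : ∀ p₁ f p₂ q₁ g q₂, p = p₁ ++ f :: p₂ → q = q₁ ++ g :: q₂ →
      N.tail f = N.tail g → p₁ = q₁) {s t : N.V × List N.A} (hs : N.IsLCS {p, q} s)
    (ht : N.IsLCS {p, q} t) : s = t := by
  obtain ⟨π, rfl, hπ⟩ := hs.exists_eq_prefix hp hq hw hw' hagree
  obtain ⟨π', rfl, hπ'⟩ := ht.exists_eq_prefix hp hq hw hw' hagree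
  rcases le_total π.length π'.length with hle | hle
  · exact (hs.eq_of_segLE ht.1 ⟨(List.prefix_of_prefix_length_le hπ hπ' hle).isInfix,
      Set.mem_insert _ _⟩ ht.2.1).symm
  · exact ht.eq_of_segLE hs.1 ⟨(List.prefix_of_prefix_length_le hπ' hπ hle).isInfix,
      Set.mem_insert _ _⟩ hs.2.1

end Agree

variable {P : Fin k → Fin k → List N.A}

theorem isPairLCSOn_comm {x y : Fin k} {p : List N.A} {s : N.V × List N.A} :
    N.IsPairLCSOn P x y p s ↔ N.IsPairLCSOn P y x p s := by
  constructor <;>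
  · rintro ⟨⟨i, i', h⟩, hs⟩
    exact ⟨⟨i', i, Set.pair_comm (P i _) (P i' _) ▸ h⟩, hs⟩

theorem mset_comm (x y c : Fin k) : N.mset P x y c = N.mset P y x c := by
  simp only [mset, lcsCount, isPairLCSOn_comm]

theorem eq_of_lcsCount_eq_one {x y : Fin k} {p : List N.A} (h : N.lcsCount P x y p = 1)
    {s t : N.V × List N.A} (hs : N.IsPairLCSOn P x y p s) (ht : N.IsPairLCSOn P x y p t) :
    s = t := by
  rw [lcsCount, Nat.card_coe_set_eq, Set.ncard_eq_one] at h
  obtain ⟨r, hr⟩ := h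
  have hs' : s ∈ {s | N.IsPairLCSOn P x y p s} := hs
  have ht' : t ∈ {s | N.IsPairLCSOn P x y p s} := ht
  rw [hr] at hs' ht'
  exact hs'.trans ht'.symm

theorem exists_ne_of_lcsCount_ne_one {x y : Fin k} {p : List N.A} (h : N.lcsCount P x y p ≠ 1)
    {s : N.V × List N.A} (hs : N.IsPairLCSOn P x y p s) :
    ∃ t, N.IsPairLCSOn P x y p t ∧ t ≠ s := by
  by_contra! hall
  refine h ?_
  rw [lcsCount, Nat.card_coe_set_eq, Set.ncard_eq_one]
  exact ⟨s, Set.eq_singleton_iff_unique_mem.2 ⟨hs, hall⟩⟩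

theorem IsStrongSystem.eq_of_snk_mem (hP : N.IsStrongSystem P) {c i j : Fin k}
    (h : N.snk c ∈ N.pathVerts (P i j)) : c = j :=
  N.snk_inj ((hP.1 i j).snk_eq h)

/-- A common vertex would lie on an l.c.s. on `P z y` other than the one through `s_z`. -/
theorem IsStrongSystem.not_mem_pathVerts_of_lcsCount_eq_one (hP : N.IsStrongSystem P)
    {x y z a : Fin k} (hz : N.lcsCount P x y (P z y) = 1) (haz : a ≠ z) {v : N.V}
    (hva : v ∈ N.pathVerts (P a x)) : v ∉ N.pathVerts (P z y) := by
  intro hvz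
  obtain ⟨σ, hσ, hzσ⟩ := (hP.1 z x).exists_isLCS_start (hP.1 z y)
  obtain ⟨s, hs, -⟩ := exists_isLCS_segLE (isSeg_nil v) (segOn_nil hva) (segOn_nil hvz)
  obtain rfl : σ = s := eq_of_lcsCount_eq_one hz ⟨⟨z, z, hσ⟩, hσ.2.1 _ (by simp)⟩
    ⟨⟨a, z, hs⟩, hs.2.1 _ (by simp)⟩
  have hza := (hP.1 a x).src_eq ((hs.2.1 (P a x) (by simp)).mem_pathVerts hzσ)
  exact haz (N.src_inj hza).symm

theorem IsStrongSystem.not_mem_of_lcsCount_eq_one (hP : N.IsStrongSystem P) {x y z a : Fin k}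
    (hz : N.lcsCount P x y (P z y) = 1) (haz : a ≠ z) {e : N.A} (he : e ∈ P a x) :
    e ∉ P z y :=
  fun hez => hP.not_mem_pathVerts_of_lcsCount_eq_one hz haz ⟨e, he, Or.inl rfl⟩
    ⟨e, hez, Or.inl rfl⟩

namespace IsStableSystem

theorem eq_of_replace₂ (hP : N.IsStableSystem P) {y a b : Fin k} (hab : a ≠ b)
    {La Lb : List N.A} (ha : N.IsPathFrom (N.src a) (N.snk y) La)
    (hb : N.IsPathFrom (N.src b) (N.snk y) Lb) (hLab : ∀ e ∈ La, e ∉ Lb)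
    (hLa : ∀ c, c ≠ a → c ≠ b → ∀ e ∈ La, e ∉ P c y)
    (hLb : ∀ c, c ≠ a → c ≠ b → ∀ e ∈ Lb, e ∉ P c y) : La = P a y := by
  classical
  let Q : Fin k → List N.A := fun c => if c = a then La else if c = b then Lb else P c y
  have hpaths : ∀ c, N.IsPathFrom (N.src c) (N.snk y) (Q c) := by
    intro c
    simp only [Q]
    split_ifs with hca hcb
    · exact hca ▸ ha
    · exact hcb ▸ hb
    · exact hP.1.1 c y
  have hdisj : ∀ c c', c ≠ c' → ∀ e ∈ Q c, e ∉ Q c' := by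
    intro c c' hcc' e he he'
    simp only [Q] at he he'
    split_ifs at he he' <;> subst_vars
    all_goals first
      | exact hcc' rfl
      | exact hLab e he he' | exact hLab e he' he
      | exact hLa _ ‹_› ‹_› e he he' | exact hLa _ ‹_› ‹_› e he' he
      | exact hLb _ ‹_› ‹_› e he he' | exact hLb _ ‹_› ‹_› e he' he
      | exact hP.1.2 y _ _ hcc' e he he'
  simpa [Q] using hP.2 y Q hpaths hdisj a

/-- Otherwise the two paths could exchange their final parts at the common vertex. -/
theorem eq_snk_of_mem_pathVerts (hP : N.IsStableSystem P) {x a b : Fin k} (hab : a ≠ b)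
    {v : N.V} (hva : v ∈ N.pathVerts (P a x)) (hvb : v ∈ N.pathVerts (P b x)) :
    v = N.snk x := by
  by_contra hvx
  obtain ⟨p₁, f, p₂, hpa, hf⟩ := (hP.1.1 a x).exists_eq_append_cons hva hvx
  obtain ⟨q₁, g, q₂, hpb, hg⟩ := (hP.1.1 b x).exists_eq_append_cons hvb hvx
  have hfg : N.tail f = N.tail g := hf.trans hg.symm
  have hpathA := hP.1.1 a x
  have hpathB := hP.1.1 b x
  have hAc : ∀ c, c ≠ a → ∀ e ∈ P a x, e ∉ P c x := fun c hc => hP.1.2 x a c (Ne.symm hc)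
  have hBc : ∀ c, c ≠ b → ∀ e ∈ P b x, e ∉ P c x := fun c hc => hP.1.2 x b c (Ne.symm hc)
  rw [hpa] at hpathA hAc
  rw [hpb] at hpathB hBc
  have hdA := List.nodup_append.1 (nodup_of_isChain hpathA.isChain)
  have hdB := List.nodup_append.1 (nodup_of_isChain hpathB.isChain)
  have hswap := hP.eq_of_replace₂ hab (hpathA.splice hpathB hfg) (hpathB.splice hpathA hfg.symm)
    ?_ ?_ ?_
  · rw [hpa] at hswap
    obtain ⟨rfl, -⟩ := List.cons.inj (List.append_cancel_left hswap)
    exact hAc b hab.symm g (by simp) (hpb ▸ by simp)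
  · intro e he he'
    rw [List.mem_append] at he he'
    rcases he with he | he <;> rcases he' with he' | he'
    · exact hAc b hab.symm e (by simp [he]) (hpb ▸ by simp [he'])
    · exact hdA.2.2 e he e he' rfl
    · exact hdB.2.2 e he' e he rfl
    · exact hBc a hab e (by simp [he]) (hpa ▸ by simp [he'])
  · intro c hca hcb e he
    rcases List.mem_append.1 he with he | he
    · exact hAc c hca e (by simp [he])
    · exact hBc c hcb e (by simp [he])
  · intro c hca hcb e he
    rcases List.mem_append.1 he with he | he
    · exact hBc c hcb e (by simp [he])
    · exact hAc c hca e (by simp [he])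

theorem not_mem_of_mem_of_mem (hP : N.IsStableSystem P) {x y a b c : Fin k}
    (hxy : x ≠ y) (hab : a ≠ b) {v : N.V} (hva : v ∈ N.pathVerts (P a x))
    (hvb : v ∈ N.pathVerts (P b x)) : v ∉ N.pathVerts (P c y) := by
  rw [hP.eq_snk_of_mem_pathVerts hab hva hvb]
  exact fun h => hxy (hP.1.eq_of_snk_mem h)

end IsStableSystem

theorem fin_three_eq_of_ne_of_ne {a b z : Fin 3} (hab : a ≠ b) (hbz : b ≠ z) (haz : a ≠ z)
    {c : Fin 3} (hca : c ≠ a) (hcb : c ≠ b) : c = z := by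
  revert a b z c; decide

namespace IsStableSystem

variable {N : KPairNetwork 3} {P : Fin 3 → Fin 3 → List N.A} {x y a b z : Fin 3}

theorem eq_of_avoids (hP : N.IsStableSystem P) (hab : a ≠ b) (hbz : b ≠ z) (haz : a ≠ z)
    {L : List N.A} (hL : N.IsPathFrom (N.src a) (N.snk y) L) (hLb : ∀ e ∈ L, e ∉ P b y)
    (hLz : ∀ e ∈ L, e ∉ P z y) : L = P a y :=
  hP.eq_of_replace₂ hab hL (hP.1.1 b y) hLb
    (fun _ hca hcb => fin_three_eq_of_ne_of_ne hab hbz haz hca hcb ▸ hLz)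
    (fun c _ hcb => hP.1.2 y b c (Ne.symm hcb))

/-- Otherwise the initial part of `P a x` followed by the final part of `P a y` would be a second
choice of `P a y`. -/
theorem prefix_eq_of_tail_eq (hP : N.IsStableSystem P) (hab : a ≠ b) (hbz : b ≠ z)
    (haz : a ≠ z) (hz : N.lcsCount P x y (P z y) = 1) {p₁ p₂ q₁ q₂ : List N.A} {f g : N.A}
    (hpa : P a x = p₁ ++ f :: p₂) (hqa : P a y = q₁ ++ g :: q₂) (hfg : N.tail f = N.tail g)
    (hp₁ : ∀ e ∈ p₁, e ∉ P b y) : p₁ = q₁ := by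
  have hL := (hpa ▸ hP.1.1 a x).splice (hqa ▸ hP.1.1 a y) hfg
  have hsuffix : ∀ e ∈ g :: q₂, e ∈ P a y := fun e he => hqa ▸ by simp [he]
  refine List.append_cancel_right ((hP.eq_of_avoids hab hbz haz hL ?_ ?_).trans hqa)
  · intro e he
    rcases List.mem_append.1 he with he | he
    · exact hp₁ e he
    · exact hP.1.2 y a b hab e (hsuffix e he)
  · intro e he
    rcases List.mem_append.1 he with he | he
    · exact hP.1.not_mem_of_lcsCount_eq_one hz haz (hpa ▸ by simp [he])
    · exact hP.1.2 y a z haz e (hsuffix e he)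

/-- A second l.c.s. on `P a x` lies on `P b y`, or it is an l.c.s. of `P a x` and `P a y`, which
then part and meet again. -/
theorem meets_of_lcsCount_ne_one (hP : N.IsStableSystem P) (hxy : x ≠ y) (hab : a ≠ b)
    (hbz : b ≠ z) (haz : a ≠ z) (hz : N.lcsCount P x y (P z y) = 1)
    (ha : N.lcsCount P x y (P a x) ≠ 1) :
    (N.pathVerts (P a x) ∩ N.pathVerts (P b y)).Nonempty := by
  by_contra hno
  have hno' : ∀ v ∈ N.pathVerts (P a x), v ∉ N.pathVerts (P b y) :=
    fun v h₁ h₂ => hno ⟨v, h₁, h₂⟩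
  obtain ⟨σ, hσ, -⟩ := (hP.1.1 a x).exists_isLCS_start (hP.1.1 a y)
  obtain ⟨r, ⟨⟨i, i', hr⟩, hra⟩, hrσ⟩ :=
    exists_ne_of_lcsCount_ne_one ha ⟨⟨a, a, hσ⟩, hσ.2.1 _ (by simp)⟩
  have hri : r.1 ∈ N.pathVerts (P i x) := (hr.2.1 _ (by simp)).2
  have hri' : r.1 ∈ N.pathVerts (P i' y) := (hr.2.1 _ (by simp)).2
  by_cases hi'a : i' = a
  · subst hi'a
    obtain rfl : i = i' := by
      by_contra hia
      exact hP.not_mem_of_mem_of_mem hxy hia hri hra.2 hri'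
    refine hrσ (hr.eq_of_agree (hP.1.1 i x) (hP.1.1 i y) (fun h => hxy (hP.1.eq_of_snk_mem h))
      (fun h => hxy (hP.1.eq_of_snk_mem h).symm) ?_ hσ)
    intro p₁ f p₂ q₁ g q₂ hp hq hfg
    refine hP.prefix_eq_of_tail_eq hab hbz haz hz hp hq hfg fun e he heb => ?_
    exact hno' (N.tail e) ⟨e, hp ▸ by simp [he], Or.inl rfl⟩ ⟨e, heb, Or.inl rfl⟩
  by_cases hi'b : i' = b
  · exact hno' r.1 hra.2 (hi'b ▸ hri')
  · exact hP.1.not_mem_pathVerts_of_lcsCount_eq_one hz haz hra.2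
      (fin_three_eq_of_ne_of_ne hab hbz haz hi'a hi'b ▸ hri')

/-- Otherwise `P a x` and `P a y` would agree up to the common arc, and the tail of `g`, a vertex
of `P b x`, would lie on `P a x` and on `P a y`. -/
theorem first_prefix_disjoint (hP : N.IsStableSystem P) (hxy : x ≠ y) (hab : a ≠ b)
    (hbz : b ≠ z) (haz : a ≠ z) (hz : N.lcsCount P x y (P z y) = 1)
    {p₁ p₂ s₁ s₂ : List N.A} {f g : N.A} (hpa : P a x = p₁ ++ f :: p₂)
    (hp₁ : ∀ e ∈ p₁, e ∉ P b y) (hsa : P a y = s₁ ++ g :: s₂)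
    (hg : N.tail g ∈ N.pathVerts (P b x)) : ∀ e ∈ p₁, e ∉ g :: s₂ := by
  intro e he he'
  obtain ⟨t₁, t₂, rfl⟩ := List.mem_iff_append.1 he
  obtain ⟨u₁, u₂, hu⟩ := List.mem_iff_append.1 he'
  have ht₁ : t₁ = s₁ ++ u₁ := hP.prefix_eq_of_tail_eq hab hbz haz hz (f := e)
    (p₂ := t₂ ++ f :: p₂) (g := e) (q₂ := u₂) (by simp [hpa]) (by simp [hsa, hu]) rfl
    fun e' he' => hp₁ e' (by simp [he'])
  have hga : g ∈ P a x := by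
    rcases u₁ with _ | ⟨c, u₁⟩
    · obtain rfl : g = e := (List.cons.inj hu).1
      exact hpa ▸ by simp
    · obtain rfl : g = c := (List.cons.inj hu).1
      exact hpa ▸ by simp [ht₁]
  have hgy : g ∈ P a y := by simp [hsa]
  exact hP.not_mem_of_mem_of_mem hxy hab ⟨g, hga, Or.inl rfl⟩ hg ⟨g, hgy, Or.inl rfl⟩

theorem false_of_meets_of_meets (hP : N.IsStableSystem P) (hxy : x ≠ y) (hab : a ≠ b)
    (hbz : b ≠ z) (haz : a ≠ z) (hz : N.lcsCount P x y (P z y) = 1)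
    (h₁ : (N.pathVerts (P a x) ∩ N.pathVerts (P b y)).Nonempty)
    (h₂ : (N.pathVerts (P b x) ∩ N.pathVerts (P a y)).Nonempty) : False := by
  have hsnk_x : ∀ c, N.snk x ∉ N.pathVerts (P c y) := fun c h => hxy (hP.1.eq_of_snk_mem h)
  have hsnk_y : ∀ c v, v ∈ N.pathVerts (P c x) → v ≠ N.snk y :=
    fun c v hv h => hxy (hP.1.eq_of_snk_mem (h ▸ hv)).symm
  obtain ⟨p₁, f, p₂, hpa, hfb, hp₁⟩ := (hP.1.1 a x).exists_first_tail_mem h₁ (hsnk_x b)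
  obtain ⟨q₁, g, q₂, hqb, hga, hq₁⟩ := (hP.1.1 b x).exists_first_tail_mem h₂ (hsnk_x a)
  have hfa : N.tail f ∈ N.pathVerts (P a x) := ⟨f, hpa ▸ by simp, Or.inl rfl⟩
  have hgb : N.tail g ∈ N.pathVerts (P b x) := ⟨g, hqb ▸ by simp, Or.inl rfl⟩
  obtain ⟨r₁, f', r₂, hrb, hf'⟩ := (hP.1.1 b y).exists_eq_append_cons hfb (hsnk_y a _ hfa)
  obtain ⟨s₁, g', s₂, hsa, hg'⟩ := (hP.1.1 a y).exists_eq_append_cons hga (hsnk_y b _ hgb)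
  have hp₁' : ∀ e ∈ p₁, e ∉ P b y := fun e he heb => hp₁ e he ⟨e, heb, Or.inl rfl⟩
  have hq₁' : ∀ e ∈ q₁, e ∉ P a y := fun e he hea => hq₁ e he ⟨e, hea, Or.inl rfl⟩
  have hpA : ∀ e ∈ p₁, e ∈ P a x := fun e he => hpa ▸ by simp [he]
  have hqB : ∀ e ∈ q₁, e ∈ P b x := fun e he => hqb ▸ by simp [he]
  have hrB : ∀ e ∈ f' :: r₂, e ∈ P b y := fun e he => hrb ▸ by simp_all
  have hsA : ∀ e ∈ g' :: s₂, e ∈ P a y := fun e he => hsa ▸ by simp_all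
  have hLa := (hpa ▸ hP.1.1 a x).splice (hrb ▸ hP.1.1 b y) hf'.symm
  have hLb := (hqb ▸ hP.1.1 b x).splice (hsa ▸ hP.1.1 a y) hg'.symm
  have hrerouted := hP.eq_of_replace₂ hab hLa hLb ?_ ?_ ?_
  · exact hP.1.2 y b a hab.symm f' (hrB f' (by simp)) (hrerouted ▸ by simp)
  · intro e he he'
    rw [List.mem_append] at he he'
    rcases he with he | he <;> rcases he' with he' | he'
    · exact hP.1.2 x a b hab e (hpA e he) (hqB e he')
    · exact hP.first_prefix_disjoint hxy hab hbz haz hz hpa hp₁' hsa (hg' ▸ hgb) e he he'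
    · exact hP.first_prefix_disjoint hxy hab.symm haz hbz hz hqb hq₁' hrb (hf' ▸ hfa) e he' he
    · exact hP.1.2 y b a hab.symm e (hrB e he) (hsA e he')
  · intro c hca hcb e he
    obtain rfl := fin_three_eq_of_ne_of_ne hab hbz haz hca hcb
    rcases List.mem_append.1 he with he | he
    · exact hP.1.not_mem_of_lcsCount_eq_one hz haz (hpA e he)
    · exact hP.1.2 y b c hbz e (hrB e he)
  · intro c hca hcb e he
    obtain rfl := fin_three_eq_of_ne_of_ne hab hbz haz hca hcb
    rcases List.mem_append.1 he with he | he
    · exact hP.1.not_mem_of_lcsCount_eq_one hz hbz (hqB e he)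
    · exact hP.1.2 y a c haz e (hsA e he)

theorem mem_mset_or_mem_mset (hP : N.IsStableSystem P) (hxy : x ≠ y) (hxz : x ≠ z)
    (hyz : y ≠ z) (hz : z ∈ N.mset P x y y) : x ∈ N.mset P x y x ∨ y ∈ N.mset P x y x := by
  by_contra! h
  exact hP.false_of_meets_of_meets hxy hxy hyz hxz hz
    (hP.meets_of_lcsCount_ne_one hxy hxy hyz hxz hz h.1)
    (hP.meets_of_lcsCount_ne_one hxy hxy.symm hxz hyz hz h.2)

theorem not_mset_eq_singleton_and (hP : N.IsStableSystem P) (hxy : x ≠ y) (hxz : x ≠ z)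
    (hyz : y ≠ z) (hx : N.mset P x y x = {z}) (hy : N.mset P x y y = {z}) : False := by
  rcases hP.mem_mset_or_mem_mset hxy hxz hyz (hy ▸ rfl) with h | h <;> rw [hx] at h
  · exact hxz h
  · exact hyz h

end IsStableSystem

end KPairNetwork

/-- beginning of Case 2 of the proof of the main theorem:
in a stable 3-pair network such that for all pairwise distinct `i, j, l`
either `m_{i,j}^i = {l}` or `m_{i,l}^i = {j}`, if `m_{i,j}^i = {l}` for some
pairwise distinct `i, j, l`, then `l ∈ m_{i,j}^i`, `j ∈ m_{i,l}^l` and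
`i ∈ m_{j,l}^j`. -/
theorem statement16 (N : KPairNetwork 3) (P : Fin 3 → Fin 3 → List N.A)
    (hP : N.IsStableSystem P)
    (hyp : ∀ i j l : Fin 3, i ≠ j → i ≠ l → j ≠ l →
      N.mset P i j i = {l} ∨ N.mset P i l i = {j})
    (i j l : Fin 3) (hij : i ≠ j) (hil : i ≠ l) (hjl : j ≠ l)
    (h : N.mset P i j i = {l}) :
    l ∈ N.mset P i j i ∧ j ∈ N.mset P i l l ∧ i ∈ N.mset P j l j := by
  have hjl_j : N.mset P j l j = {i} := by
    rcases hyp j i l hij.symm hjl hil with h' | h'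
    · exact (hP.not_mset_eq_singleton_and hij hil hjl h (N.mset_comm j i j ▸ h')).elim
    · exact h'
  refine ⟨h ▸ rfl, ?_, hjl_j ▸ rfl⟩
  rcases hyp l i j hil.symm hjl.symm hij with h' | h'
  · exact N.mset_comm l i l ▸ h' ▸ rfl
  · exact (hP.not_mset_eq_singleton_and hjl hij.symm hil.symm hjl_j
      (N.mset_comm l j l ▸ h')).elim
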